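/- arXiv:2012.15787 — 4 statements merged into one kernel-verified Lean document; each statement's English description precedes it below -/
import Mathlib

section
/- Let P be a finite Γ-colored d-complete poset with top tree T and assume Γ is simply laced. Then T = Ch(P), where Ch(P) is the set of elements of P whose principal filter is a chain. -/
/-!
Common definitions: Dynkin diagram data, Γ-colored posets, and the coloring
properties EC, NA, AC, ICE2, UCB1, LCB1 from the paper, together with
Γ-colored d-complete and Γ-colored minuscule posets, top trees, slant
irreducibility, extensions, lower frontier censuses, and full heaps.
-/

universe u v w

variable {Γ : Type u} {P : Type v}

/-- The integers `θ a b` form a Dynkin diagram datum. -/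
def DynkinDatum (θ : Γ → Γ → ℤ) : Prop :=
  (∀ a : Γ, θ a a = 2) ∧ (∀ a b : Γ, a ≠ b → θ a b ≤ 0) ∧
    (∀ a b : Γ, a ≠ b → (θ a b = 0 ↔ θ b a = 0))

/-- Colors `a` and `b` are adjacent. -/
def AdjColor (θ : Γ → Γ → ℤ) (a b : Γ) : Prop := θ a b < 0

/-- The Dynkin diagram is simply laced. -/
def SimplyLaced (θ : Γ → Γ → ℤ) : Prop :=
  ∀ a b : Γ, a ≠ b → θ a b = 0 ∨ θ a b = -1

/-- All closed intervals are finite. -/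
def LocallyFinitePoset (α : Type*) [PartialOrder α] : Prop :=
  ∀ x y : α, (Set.Icc x y).Finite

/-- A poset is connected if it cannot be written as a disjoint union of two nonempty
subposets with no comparabilities between them. -/
def ConnectedPoset (α : Type*) [PartialOrder α] : Prop :=
  ∀ S : Set α, S.Nonempty → Sᶜ.Nonempty → ∃ x ∈ S, ∃ y ∈ Sᶜ, x ≤ y ∨ y ≤ x

section
variable [PartialOrder P]

/-- (EC) Elements with equal colors are comparable. -/
def ColoredEC (κ : P → Γ) : Prop := ∀ x y : P, κ x = κ y → x ≤ y ∨ y ≤ x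

/-- (NA) Neighbors have adjacent colors. -/
def ColoredNA (θ : Γ → Γ → ℤ) (κ : P → Γ) : Prop :=
  ∀ x y : P, x ⋖ y → AdjColor θ (κ x) (κ y)

/-- (AC) Elements with adjacent colors are comparable. -/
def ColoredAC (θ : Γ → Γ → ℤ) (κ : P → Γ) : Prop :=
  ∀ x y : P, AdjColor θ (κ x) (κ y) → x ≤ y ∨ y ≤ x

/-- (ICE2) Between consecutive elements of a color `a`, the census of colors
adjacent to `a` is two. -/
def ColoredICE2 (θ : Γ → Γ → ℤ) (κ : P → Γ) : Prop :=
  ∀ (a : Γ) (x y : P), κ x = a → κ y = a → x < y → (∀ z ∈ Set.Ioo x y, κ z ≠ a) →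
    (∑ᶠ z ∈ Set.Ioo x y, -θ (κ z) a) = 2

/-- `U(x,P)`: elements above `x` with color adjacent to that of `x`. -/
def USet (θ : Γ → Γ → ℤ) (κ : P → Γ) (x : P) : Set P :=
  {y : P | x < y ∧ AdjColor θ (κ y) (κ x)}

/-- `L(x,P)`: elements below `x` with color adjacent to that of `x`. -/
def LSet (θ : Γ → Γ → ℤ) (κ : P → Γ) (x : P) : Set P :=
  {y : P | y < x ∧ AdjColor θ (κ y) (κ x)}

/-- (UCB1) Upper frontier census bound. -/
def ColoredUCB1 (θ : Γ → Γ → ℤ) (κ : P → Γ) : Prop :=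
  ∀ x : P, (∀ y : P, κ y = κ x → ¬x < y) →
    (USet θ κ x).Finite ∧ (∑ᶠ y ∈ USet θ κ x, -θ (κ y) (κ x)) ≤ 1

/-- (LCB1) Lower frontier census bound. -/
def ColoredLCB1 (θ : Γ → Γ → ℤ) (κ : P → Γ) : Prop :=
  ∀ x : P, (∀ y : P, κ y = κ x → ¬y < x) →
    (LSet θ κ x).Finite ∧ (∑ᶠ y ∈ LSet θ κ x, -θ (κ y) (κ x)) ≤ 1

/-- A Γ-colored d-complete poset: locally finite, surjectively colored, and
satisfying EC, NA, AC, ICE2, and UCB1. -/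
def GColoredDComplete (θ : Γ → Γ → ℤ) (κ : P → Γ) : Prop :=
  LocallyFinitePoset P ∧ Function.Surjective κ ∧ ColoredEC κ ∧ ColoredNA θ κ ∧
    ColoredAC θ κ ∧ ColoredICE2 θ κ ∧ ColoredUCB1 θ κ

/-- A Γ-colored minuscule poset: Γ-colored d-complete and LCB1. -/
def GColoredMinuscule (θ : Γ → Γ → ℤ) (κ : P → Γ) : Prop :=
  GColoredDComplete θ κ ∧ ColoredLCB1 θ κ

/-- The top tree: the set of elements maximal in their color class. -/
def TopTree (κ : P → Γ) : Set P := {x : P | ∀ y : P, κ y = κ x → ¬x < y}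

/-- `x` is covered by `y` within the subposet `S`. -/
def CoversIn (S : Set P) (x y : P) : Prop :=
  x ∈ S ∧ y ∈ S ∧ x < y ∧ ∀ z ∈ S, x < z → ¬z < y

/-- Slant irreducibility of a Γ-colored d-complete poset. -/
def SlantIrreducible (κ : P → Γ) : Prop :=
  ConnectedPoset P ∧ ∀ x y : P, CoversIn (TopTree κ) x y → ∃ z : P, z ≠ y ∧ κ z = κ y

/-- A saturated chain in a subposet `S`: a chain that is convex in `S`. -/
def SaturatedChainIn (S C : Set P) : Prop :=
  C ⊆ S ∧ IsChain (· ≤ ·) C ∧ ∀ x ∈ C, ∀ y ∈ C, ∀ z ∈ S, x < z → z < y → z ∈ C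

/-- The lower frontier census at the element `y`. -/
noncomputable def LCensus (θ : Γ → Γ → ℤ) (κ : P → Γ) (y : P) : ℤ :=
  ∑ᶠ x ∈ LSet θ κ y, -θ (κ x) (κ y)

/-- A full heap: locally finite, surjectively colored, EC, NA, AC, ICE2, and every
color class order-isomorphic to ℤ. -/
def FullHeap (θ : Γ → Γ → ℤ) (κ : P → Γ) : Prop :=
  LocallyFinitePoset P ∧ Function.Surjective κ ∧ ColoredEC κ ∧ ColoredNA θ κ ∧
    ColoredAC θ κ ∧ ColoredICE2 θ κ ∧ ∀ a : Γ, Nonempty ({x : P // κ x = a} ≃o ℤ)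

end

/-- `ι` realizes the colored poset `A` as an order filter of the colored poset `B`. -/
def FilterEmbedding {G : Type*} {A B : Type*} [PartialOrder A] [PartialOrder B]
    (κ : A → G) (κ' : B → G) (ι : A → B) : Prop :=
  (∀ p q : A, ι p ≤ ι q ↔ p ≤ q) ∧ (∀ p : A, κ' (ι p) = κ p) ∧ IsUpperSet (Set.range ι)

/-- `B` is an extension of `A` by the color `a`, with extending element `x`. -/
def IsExtensionBy {G : Type*} {A B : Type*} [PartialOrder A] [PartialOrder B]
    (θ : G → G → ℤ) (κ : A → G) (κ' : B → G) (a : G) (ι : A → B) (x : B) : Prop :=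
  Finite B ∧ GColoredDComplete θ κ' ∧ ConnectedPoset B ∧
    FilterEmbedding κ κ' ι ∧ (Set.range ι)ᶜ = {x} ∧ κ' x = a

/-!
In the simply laced case UCB1 says that an element `x` maximal in its color has at most one
element above it of adjacent color. By NA every upper cover of `x` is such an element, so `x`
has a unique upper cover, which is again maximal in its color, and `Ici x` is a chain by
downward induction.

Conversely, let `Ici x` be a chain and, by downward induction, let every element above `x` lie
in the top tree. If `v` is the next element above `x` of the color of `x`, take covers
`x ⋖ s ≤ v` and `s ⋖ t ≤ v`; both `t` and `v` lie in `U(s)`, so `t = v`. The chain condition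
then leaves `(x, v) = {s}`, whose census is at most 1, contradicting ICE2.
-/

section DComplete

variable [PartialOrder P] {θ : Γ → Γ → ℤ} {κ : P → Γ} {a b : Γ} {x y c s v : P}

theorem AdjColor.ne (h : AdjColor θ a b) (hθ : DynkinDatum θ) : a ≠ b := by
  rintro rfl
  have := hθ.1 a
  unfold AdjColor at h
  omega

theorem AdjColor.symm (h : AdjColor θ a b) (hθ : DynkinDatum θ) : AdjColor θ b a :=
  (hθ.2.1 b a (h.ne hθ).symm).lt_of_ne fun h0 => ne_of_lt h ((hθ.2.2 a b (h.ne hθ)).mpr h0)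

theorem SimplyLaced.neg_le_one (hsl : SimplyLaced θ) (hab : a ≠ b) : -θ a b ≤ 1 := by
  rcases hsl a b hab with h | h <;> omega

theorem AdjColor.neg_eq_one (h : AdjColor θ a b) (hθ : DynkinDatum θ) (hsl : SimplyLaced θ) :
    -θ a b = 1 := by
  rcases hsl a b (h.ne hθ) with h' | h' <;> unfold AdjColor at h <;> omega

theorem mem_uSet_of_covBy (hθ : DynkinDatum θ) (hNA : ColoredNA θ κ) (h : x ⋖ c) :
    c ∈ USet θ κ x :=
  ⟨h.lt, (hNA x c h).symm hθ⟩

theorem ColoredUCB1.subsingleton_uSet (h : ColoredUCB1 θ κ) (hθ : DynkinDatum θ)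
    (hsl : SimplyLaced θ) (hx : x ∈ TopTree κ) : (USet θ κ x).Subsingleton := by
  obtain ⟨hfin, hsum⟩ := h x hx
  have hcard : ∑ᶠ y ∈ USet θ κ x, -θ (κ y) (κ x) = hfin.toFinset.card := by
    rw [finsum_mem_eq_finite_toFinset_sum _ hfin, Finset.card_eq_sum_ones, Nat.cast_sum,
      Nat.cast_one]
    exact Finset.sum_congr rfl fun y hy => (hfin.mem_toFinset.mp hy).2.neg_eq_one hθ hsl
  rw [← hfin.coe_toFinset]
  exact Finset.card_le_one.mp (by omega)

theorem Set.Ioo_eq_singleton_of_covBy_of_covBy (hxs : x ⋖ s) (hsv : s ⋖ v)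
    (hchain : IsChain (· ≤ ·) (Set.Ioo x v)) : Set.Ioo x v = {s} := by
  refine Set.eq_singleton_iff_unique_mem.mpr ⟨⟨hxs.lt, hsv.lt⟩, fun z hz => ?_⟩
  by_contra hne
  rcases hchain hz ⟨hxs.lt, hsv.lt⟩ hne with h | h
  · exact hxs.2 hz.1 (h.lt_of_ne hne)
  · exact hsv.2 (h.lt_of_ne (Ne.symm hne)) hz.2

theorem le_of_covBy_of_lt_of_mem_topTree [IsStronglyAtomic P] (hθ : DynkinDatum θ)
    (hsl : SimplyLaced θ) (hNA : ColoredNA θ κ) (hUCB1 : ColoredUCB1 θ κ)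
    (hx : x ∈ TopTree κ) (hc : x ⋖ c) (hy : x < y) : c ≤ y := by
  obtain ⟨d, hd, hdy⟩ := exists_covBy_le_of_lt hy
  rwa [hUCB1.subsingleton_uSet hθ hsl hx (mem_uSet_of_covBy hθ hNA hc)
    (mem_uSet_of_covBy hθ hNA hd)]

theorem mem_topTree_of_covBy (hθ : DynkinDatum θ) (hsl : SimplyLaced θ) (hNA : ColoredNA θ κ)
    (hUCB1 : ColoredUCB1 θ κ) (hx : x ∈ TopTree κ) (hc : x ⋖ c) : c ∈ TopTree κ := by
  intro q hq hcq
  have hcU := mem_uSet_of_covBy hθ hNA hc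
  exact hcq.ne (hUCB1.subsingleton_uSet hθ hsl hx hcU ⟨hc.lt.trans hcq, hq ▸ hcU.2⟩)

theorem isChain_Ici_of_mem_topTree [Finite P] (hθ : DynkinDatum θ) (hsl : SimplyLaced θ)
    (hNA : ColoredNA θ κ) (hUCB1 : ColoredUCB1 θ κ) (hx : x ∈ TopTree κ) :
    IsChain (· ≤ ·) (Set.Ici x) := by
  induction x using WellFoundedGT.induction with
  | _ x ih =>
  by_cases hmax : IsMax x
  · rw [hmax.Ici_eq]
    exact Set.Subsingleton.isChain Set.subsingleton_singleton
  obtain ⟨y, hxy⟩ := not_isMax_iff.mp hmax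
  obtain ⟨c, hc, -⟩ := exists_covBy_le_of_lt hxy
  have hIoi : Set.Ioi x = Set.Ici c := Set.ext fun y =>
    ⟨le_of_covBy_of_lt_of_mem_topTree hθ hsl hNA hUCB1 hx hc, hc.lt.trans_le⟩
  rw [← Set.Ioi_insert, hIoi]
  exact (ih c hc.lt (mem_topTree_of_covBy hθ hsl hNA hUCB1 hx hc)).insert
    fun y hy _ => Or.inl (hc.le.trans hy)

theorem mem_topTree_of_isChain_Ici_of_forall_lt [IsStronglyAtomic P] [WellFoundedLT P]
    (hθ : DynkinDatum θ) (hsl : SimplyLaced θ) (hNA : ColoredNA θ κ) (hICE2 : ColoredICE2 θ κ)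
    (hUCB1 : ColoredUCB1 θ κ) (hchain : IsChain (· ≤ ·) (Set.Ici x))
    (habove : ∀ y, x < y → y ∈ TopTree κ) : x ∈ TopTree κ := by
  intro w hw hxw
  obtain ⟨v, ⟨hxv, hv⟩, hvmin⟩ :=
    exists_minimal_of_wellFoundedLT (fun v => x < v ∧ κ v = κ x) ⟨w, hxw, hw⟩
  have hgap : ∀ z ∈ Set.Ioo x v, κ z ≠ κ x := fun z hz hzx =>
    (hvmin ⟨hz.1, hzx⟩ hz.2.le).not_gt hz.2
  obtain ⟨s, hxs, hsv⟩ := exists_covBy_le_of_lt hxv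
  have hadj : AdjColor θ (κ x) (κ s) := hNA x s hxs
  have hsv' : s < v := hsv.lt_of_ne fun hsv_eq => hadj.ne hθ (by rw [hsv_eq, hv])
  obtain ⟨t, hst, -⟩ := exists_covBy_le_of_lt hsv'
  -- `v` lies above `s` with color adjacent to `κ s`, so UCB1 at `s` forces `s ⋖ v`
  have htv : t = v := hUCB1.subsingleton_uSet hθ hsl (habove s hxs.lt)
    (mem_uSet_of_covBy hθ hNA hst) ⟨hsv', hv ▸ hadj⟩
  have hIoo : Set.Ioo x v = {s} := Set.Ioo_eq_singleton_of_covBy_of_covBy hxs (htv ▸ hst)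
    (hchain.mono fun z hz => hz.1.le)
  have hcensus := hICE2 (κ x) x v rfl hv hxv hgap
  rw [hIoo, finsum_mem_singleton] at hcensus
  have := hsl.neg_le_one (hadj.ne hθ).symm
  omega

theorem mem_topTree_of_isChain_Ici [Finite P] (hθ : DynkinDatum θ) (hsl : SimplyLaced θ)
    (hNA : ColoredNA θ κ) (hICE2 : ColoredICE2 θ κ) (hUCB1 : ColoredUCB1 θ κ)
    (hchain : IsChain (· ≤ ·) (Set.Ici x)) : x ∈ TopTree κ := by
  induction x using WellFoundedGT.induction with
  | _ x ih =>
  exact mem_topTree_of_isChain_Ici_of_forall_lt hθ hsl hNA hICE2 hUCB1 hchain fun y hxy =>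
    ih y hxy (hchain.mono (Set.Ici_subset_Ici.mpr hxy.le))

end DComplete

theorem topTree_eq_chainFilterSet_general [PartialOrder P] [Fintype P]
    (θ : Γ → Γ → ℤ) (κ : P → Γ) (hθ : DynkinDatum θ) (hsl : SimplyLaced θ)
    (hdc : GColoredDComplete θ κ) :
    TopTree κ = {x : P | IsChain (· ≤ ·) (Set.Ici x)} := by
  obtain ⟨-, -, -, hNA, -, hICE2, hUCB1⟩ := hdc
  ext x
  exact ⟨isChain_Ici_of_mem_topTree hθ hsl hNA hUCB1,
    mem_topTree_of_isChain_Ici hθ hsl hNA hICE2 hUCB1⟩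

/-- For a finite Γ-colored d-complete poset with Γ simply laced, the top
tree equals the set of elements whose principal filter is a chain. -/
theorem topTree_eq_chainFilterSet [Fintype Γ] [PartialOrder P] [Fintype P]
    (θ : Γ → Γ → ℤ) (κ : P → Γ) (hθ : DynkinDatum θ) (hsl : SimplyLaced θ)
    (hdc : GColoredDComplete θ κ) :
    TopTree κ = {x : P | IsChain (· ≤ ·) (Set.Ici x)} :=
  topTree_eq_chainFilterSet_general θ κ hθ hsl hdc
end

section
/- Let P be a connected finite Γ-colored d-complete poset, let a ∈ Γ, and let P′ be an extension of P by a with extending element x. Let y be the minimum of P_a (which is a finite nonempty chain). Then for every u ∈ P, x is covered by u in P′ if and only if u is a minimal element of L(y,P). -/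
/-!
Common definitions: Dynkin diagram data, Γ-colored posets, and the coloring
properties EC, NA, AC, ICE2, UCB1, LCB1 from the paper, together with
Γ-colored d-complete and Γ-colored minuscule posets, top trees, slant
irreducibility, extensions, lower frontier censuses, and full heaps.
-/

universe u v w

variable {Γ : Type u} {P : Type v}

/-- If P′ is an extension of a connected finite Γ-colored d-complete
poset P by the color a, with extending element x, and y is the minimum of P_a, then
x is covered in P′ by exactly the minimal elements of L(y,P). -/
theorem extension_covers {B : Type w} [Fintype Γ] [PartialOrder P] [Fintype P]
    [Nonempty P] [PartialOrder B]
    (θ : Γ → Γ → ℤ) (κ : P → Γ) (κ' : B → Γ) (hθ : DynkinDatum θ)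
    (hdc : GColoredDComplete θ κ) (hconn : ConnectedPoset P)
    (a : Γ) (ι : P → B) (x : B) (hext : IsExtensionBy θ κ κ' a ι x)
    (y : P) (hy : κ y = a) (hymin : ∀ z : P, κ z = a → y ≤ z) :
    ∀ u : P, x ⋖ ι u ↔ (u ∈ LSet θ κ y ∧ ∀ v ∈ LSet θ κ y, ¬v < u) := by
  obtain ⟨hBfin, hBdc, hBconn, ⟨hιle, hικ, hιup⟩, hcompl, hxcol⟩ := hext
  haveI := hBfin
  haveI : WellFoundedLT B := Finite.to_wellFoundedLT
  obtain ⟨_, _, hEC', hNA', hAC', _, _⟩ := hBdc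
  obtain ⟨_, _, hEC, hNA, hAC, _, _⟩ := hdc
  have hxnot : x ∉ Set.range ι := by
    have : x ∈ (Set.range ι)ᶜ := by rw [hcompl]; rfl
    exact this
  have hne : ∀ p : P, ι p ≠ x := fun p h => hxnot ⟨p, h⟩
  have hnle : ∀ p : P, ¬ι p ≤ x := fun p h => hxnot (hιup h ⟨p, rfl⟩)
  have hιlt : ∀ p q : P, ι p < ι q ↔ p < q := by
    intro p q
    rw [lt_iff_le_not_ge, lt_iff_le_not_ge, hιle, hιle]
  have hsym : ∀ b c : Γ, AdjColor θ b c → AdjColor θ c b := by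
    intro b c h
    have hbc : b ≠ c := by
      rintro rfl
      have := hθ.1 b
      unfold AdjColor at h
      omega
    have h1 := hθ.2.1 c b (Ne.symm hbc)
    have h2 := hθ.2.2 b c hbc
    unfold AdjColor at h ⊢
    rcases lt_or_eq_of_le h1 with h' | h'
    · exact h'
    · have : θ b c = 0 := h2.mpr h'
      omega
  have hxlt : ∀ p : P, AdjColor θ (κ p) a → x < ι p := by
    intro p hp
    have hcomp := hAC' (ι p) x (by rw [hικ, hxcol]; exact hp)
    rcases hcomp with h | h
    · exact absurd h (hnle p)
    · exact lt_of_le_of_ne h (Ne.symm (hne p))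
  have hxy : x < ι y := by
    have hcomp := hEC' (ι y) x (by rw [hικ, hy, hxcol])
    rcases hcomp with h | h
    · exact absurd h (hnle y)
    · exact lt_of_le_of_ne h (Ne.symm (hne y))
  have hfwd : ∀ u : P, x ⋖ ι u → u ∈ LSet θ κ y ∧ ∀ v ∈ LSet θ κ y, ¬v < u := by
    intro u hcov
    have hadj : AdjColor θ (κ u) a := by
      have h := hNA' x (ι u) hcov
      rw [hxcol, hικ] at h
      exact hsym a (κ u) h
    have hua : κ u ≠ a := by
      intro h
      rw [h] at hadj
      have := hθ.1 a
      unfold AdjColor at hadj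
      omega
    have huy : u < y := by
      have hcomp := hAC u y (by rw [hy]; exact hadj)
      rcases hcomp with h | h
      · exact lt_of_le_of_ne h (by rintro rfl; exact hua hy)
      · have hyu : y < u := lt_of_le_of_ne h (by rintro rfl; exact hua hy)
        exact absurd ((hιlt y u).mpr hyu) (hcov.2 hxy)
    refine ⟨⟨huy, by rw [hy]; exact hadj⟩, ?_⟩
    intro v hv hvu
    have hxv : x < ι v := hxlt v (by have := hv.2; rwa [hy] at this)
    exact hcov.2 hxv ((hιlt v u).mpr hvu)
  intro u
  constructor
  · exact hfwd u
  · rintro ⟨hu, hmin⟩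
    have hxu : x < ι u := hxlt u (by have := hu.2; rwa [hy] at this)
    refine ⟨hxu, ?_⟩
    intro b hxb hbu
    -- find a cover of x below b
    have hS : {c : B | x < c ∧ c ≤ b}.Nonempty := ⟨b, hxb, le_rfl⟩
    obtain ⟨w, ⟨hxw, hwb⟩, hwmin⟩ := (wellFounded_lt (α := B)).has_min _ hS
    have hcovw : x ⋖ w := by
      refine ⟨hxw, ?_⟩
      intro c hxc hcw
      exact hwmin c ⟨hxc, hcw.le.trans hwb⟩ hcw
    have hwne : w ≠ x := hxw.ne'
    have hwr : w ∈ Set.range ι := by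
      by_contra h
      have : w ∈ (Set.range ι)ᶜ := h
      rw [hcompl] at this
      exact hwne this
    obtain ⟨w', rfl⟩ := hwr
    have hmem := (hfwd w' hcovw).1
    have hw'u : w' < u := (hιlt w' u).mp (lt_of_le_of_lt hwb hbu)
    exact hmin w' hmem hw'u
end

section
/- Let P be a connected finite Γ-colored d-complete poset and let b, c ∈ Γ be distinct and distant (θ_{bc} = 0). Suppose there exist extensions P″ →(c) P′ →(b) P (i.e., P′ is an extension of P by b and P″ is an extension of P′ by c) and Q″ →(b) Q′ →(c) P. Then P″ is isomorphic to Q″ as a Γ-colored poset: there is a poset isomorphism π : P″ → Q″ with κ_{Q″} ∘ π = κ_{P″}. -/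
/-!
Common definitions: Dynkin diagram data, Γ-colored posets, and the coloring
properties EC, NA, AC, ICE2, UCB1, LCB1 from the paper, together with
Γ-colored d-complete and Γ-colored minuscule posets, top trees, slant
irreducibility, extensions, lower frontier censuses, and full heaps.
-/

universe u v w

variable {Γ : Type u} {P : Type v}

/-!
An extension of `A` by `a` is determined by `A` and `a` alone: the extending element `x` is
minimal, and by (NA), (EC) and (AC) it lies below `p` exactly when some element below `p` has
color `a` or a color adjacent to `a`. Extending twice, by distant colors `a₁` and then `a₂`, the
two new elements are incomparable, and since the first one has color neither equal nor adjacent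
to `a₂`, the second lies below `p ∈ A` under the same condition as if it had been added first.
So the order of the result is symmetric in `a₁` and `a₂`, and exchanging the two new elements
is an isomorphism of colored posets.
-/

namespace DynkinDatum

variable {θ : Γ → Γ → ℤ}

lemma ne_of_ne_two (hθ : DynkinDatum θ) {a b : Γ} (h : θ a b ≠ 2) : a ≠ b := by
  rintro rfl
  exact h (hθ.1 a)

lemma zero_symm (hθ : DynkinDatum θ) {a b : Γ} (h : θ a b = 0) : θ b a = 0 :=
  (hθ.2.2 a b (hθ.ne_of_ne_two (by omega))).1 h

lemma neg_symm (hθ : DynkinDatum θ) {a b : Γ} (h : θ a b < 0) : θ b a < 0 := by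
  have hab : a ≠ b := hθ.ne_of_ne_two (by omega)
  exact (hθ.2.1 b a hab.symm).lt_of_ne fun h0 => h.ne ((hθ.2.2 b a hab.symm).1 h0)

end DynkinDatum

def NearColor (θ : Γ → Γ → ℤ) (a b : Γ) : Prop := b = a ∨ θ b a < 0

lemma DynkinDatum.not_nearColor_of_eq_zero {θ : Γ → Γ → ℤ} (hθ : DynkinDatum θ) {a b : Γ}
    (h : θ b a = 0) : ¬NearColor θ a b := by
  rintro (rfl | hlt)
  · exact hθ.ne_of_ne_two (h.trans_ne (by norm_num)) rfl
  · omega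

def AboveNearColor {A : Type*} [PartialOrder A] (θ : Γ → Γ → ℤ) (κ : A → Γ) (a : Γ) (p : A) :
    Prop :=
  ∃ q ≤ p, NearColor θ a (κ q)

namespace IsExtensionBy

variable {A B : Type*} [PartialOrder A] [PartialOrder B] {θ : Γ → Γ → ℤ} {κ : A → Γ}
  {κ' : B → Γ} {a : Γ} {ι : A → B} {x : B}

lemma map_le_map_iff (h : IsExtensionBy θ κ κ' a ι x) {p q : A} : ι p ≤ ι q ↔ p ≤ q :=
  h.2.2.2.1.1 p q

lemma map_lt_map_iff (h : IsExtensionBy θ κ κ' a ι x) {p q : A} : ι p < ι q ↔ p < q :=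
  (OrderEmbedding.ofMapLEIff ι h.2.2.2.1.1).lt_iff_lt

lemma color_map (h : IsExtensionBy θ κ κ' a ι x) (p : A) : κ' (ι p) = κ p :=
  h.2.2.2.1.2.1 p

lemma color_extending (h : IsExtensionBy θ κ κ' a ι x) : κ' x = a :=
  h.2.2.2.2.2

lemma mem_range_iff (h : IsExtensionBy θ κ κ' a ι x) {z : B} : z ∈ Set.range ι ↔ z ≠ x := by
  rw [Ne, ← Set.mem_singleton_iff, ← h.2.2.2.2.1, Set.mem_compl_iff, not_not]

lemma map_ne_extending (h : IsExtensionBy θ κ κ' a ι x) (p : A) : ι p ≠ x :=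
  h.mem_range_iff.1 ⟨p, rfl⟩

lemma not_lt_extending (h : IsExtensionBy θ κ κ' a ι x) (z : B) : ¬z < x := fun hz =>
  h.mem_range_iff.1 (h.2.2.2.1.2.2 hz.le (h.mem_range_iff.2 hz.ne)) rfl

lemma eq_extending_of_le (h : IsExtensionBy θ κ κ' a ι x) {z : B} (hz : z ≤ x) : z = x :=
  hz.eq_or_lt.resolve_right (h.not_lt_extending z)

lemma bijective_elim (h : IsExtensionBy θ κ κ' a ι x) :
    Function.Bijective fun o : Option A => o.elim x ι := by
  refine ⟨?_, fun z => ?_⟩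
  · have hinj : ι.Injective := (OrderEmbedding.ofMapLEIff ι h.2.2.2.1.1).injective
    rintro (_ | p) (_ | q) he
    · rfl
    · exact absurd he.symm (h.map_ne_extending q)
    · exact absurd he (h.map_ne_extending p)
    · exact congrArg some (hinj he)
  · by_cases hz : z = x
    · exact ⟨none, hz.symm⟩
    · obtain ⟨p, rfl⟩ := h.mem_range_iff.2 hz
      exact ⟨some p, rfl⟩

lemma extending_lt_map_iff (hθ : DynkinDatum θ) (h : IsExtensionBy θ κ κ' a ι x) (p : A) :
    x < ι p ↔ AboveNearColor θ κ a p := by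
  have : Finite B := h.1
  obtain ⟨-, -, hEC, hNA, hAC, -⟩ := h.2.1
  constructor
  · intro hxp
    obtain ⟨w, hxw, hwp⟩ := exists_covBy_le_of_lt hxp
    obtain ⟨q, rfl⟩ := h.mem_range_iff.2 hxw.lt.ne'
    have hadj : θ a (κ q) < 0 := by
      simpa only [AdjColor, h.color_extending, h.color_map] using hNA x _ hxw
    exact ⟨q, h.map_le_map_iff.1 hwp, Or.inr (hθ.neg_symm hadj)⟩
  · rintro ⟨q, hqp, hq⟩
    have hcomp : ι q ≤ x ∨ x ≤ ι q := by
      rcases hq with hq | hq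
      · exact hEC _ _ (by rw [h.color_map, h.color_extending, hq])
      · exact hAC _ _ (by rwa [AdjColor, h.color_map, h.color_extending])
    have hxq : x ≤ ι q :=
      hcomp.resolve_left fun hle => h.map_ne_extending q (h.eq_extending_of_le hle)
    exact (hxq.trans (h.map_le_map_iff.2 hqp)).lt_of_ne (h.map_ne_extending p).symm

lemma not_aboveNearColor_extending (h : IsExtensionBy θ κ κ' a ι x) {c : Γ}
    (hc : ¬NearColor θ c a) : ¬AboveNearColor θ κ' c x := by
  rintro ⟨w, hwx, hw⟩
  obtain rfl := h.eq_extending_of_le hwx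
  exact hc (h.color_extending ▸ hw)

lemma aboveNearColor_map_iff (h : IsExtensionBy θ κ κ' a ι x) {c : Γ}
    (hc : ¬NearColor θ c a) (p : A) : AboveNearColor θ κ' c (ι p) ↔ AboveNearColor θ κ c p := by
  constructor
  · rintro ⟨w, hwp, hw⟩
    have hwx : w ≠ x := by
      rintro rfl
      exact hc (h.color_extending ▸ hw)
    obtain ⟨q, rfl⟩ := h.mem_range_iff.2 hwx
    exact ⟨q, h.map_le_map_iff.1 hwp, h.color_map q ▸ hw⟩
  · rintro ⟨q, hqp, hq⟩
    exact ⟨ι q, h.map_le_map_iff.2 hqp, (h.color_map q).symm ▸ hq⟩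

end IsExtensionBy

section TwoStep

variable {A : Type*}

/-- The strict order of the extension of `A` first by `a₁` and then by a color `a₂` distant from
`a₁`: `some (some p)` stands for `p`, `some none` for the first and `none` for the second
extending element. -/
def TwoStepLT [PartialOrder A] (θ : Γ → Γ → ℤ) (κ : A → Γ) (a₁ a₂ : Γ) :
    Option (Option A) → Option (Option A) → Prop
  | some (some p), some (some q) => p < q
  | some none, some (some q) => AboveNearColor θ κ a₁ q
  | none, some (some q) => AboveNearColor θ κ a₂ q
  | _, _ => False

def twoStepColor (κ : A → Γ) (a₁ a₂ : Γ) : Option (Option A) → Γ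
  | some (some p) => κ p
  | some none => a₁
  | none => a₂

def swapExtending : Option (Option A) → Option (Option A)
  | some (some p) => some (some p)
  | some none => none
  | none => some none

lemma swapExtending_involutive : Function.Involutive (swapExtending (A := A)) := by
  rintro (_ | _ | p) <;> rfl

lemma twoStepColor_swapExtending (κ : A → Γ) (a₁ a₂ : Γ) (o : Option (Option A)) :
    twoStepColor κ a₂ a₁ (swapExtending o) = twoStepColor κ a₁ a₂ o := by
  rcases o with _ | _ | p <;> rfl

variable [PartialOrder A] {θ : Γ → Γ → ℤ} {κ : A → Γ} {a₁ a₂ : Γ}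

def twoStepSwap : TwoStepLT θ κ a₁ a₂ ≃r TwoStepLT θ κ a₂ a₁ where
  toEquiv := swapExtending_involutive.toPerm
  map_rel_iff' := by
    rintro (_ | _ | p) (_ | _ | q) <;> rfl

variable {B C : Type*} [PartialOrder B] [PartialOrder C] {κ₁ : B → Γ} {κ₂ : C → Γ}
  {ι₁ : A → B} {x₁ : B} {ι₂ : B → C} {x₂ : C}

theorem IsExtensionBy.exists_twoStepLT_relIso (hθ : DynkinDatum θ)
    (h₁ : IsExtensionBy θ κ κ₁ a₁ ι₁ x₁) (h₂ : IsExtensionBy θ κ₁ κ₂ a₂ ι₂ x₂)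
    (hd : θ a₁ a₂ = 0) :
    ∃ e : TwoStepLT θ κ a₁ a₂ ≃r ((· < ·) : C → C → Prop),
      ∀ o, κ₂ (e o) = twoStepColor κ a₁ a₂ o := by
  have hnear : ¬NearColor θ a₂ a₁ := hθ.not_nearColor_of_eq_zero hd
  let e : Option (Option A) ≃ C :=
    (Equiv.optionCongr (Equiv.ofBijective _ h₁.bijective_elim)).trans
      (Equiv.ofBijective _ h₂.bijective_elim)
  refine ⟨⟨e, ?_⟩, ?_⟩
  · rintro (_ | _ | p) (_ | _ | q) <;>
      simp [e, TwoStepLT, h₂.map_lt_map_iff, h₁.map_lt_map_iff, h₂.not_lt_extending,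
        h₁.not_lt_extending, h₂.extending_lt_map_iff hθ, h₁.extending_lt_map_iff hθ,
        h₁.aboveNearColor_map_iff hnear, h₁.not_aboveNearColor_extending hnear]
  · rintro (_ | _ | p) <;>
      simp [e, twoStepColor, h₂.color_map, h₁.color_map, h₂.color_extending, h₁.color_extending]

end TwoStep

theorem distant_extensions_commute_general {B C D E : Type*}
    [PartialOrder P]
    [PartialOrder B] [PartialOrder C] [PartialOrder D] [PartialOrder E]
    (θ : Γ → Γ → ℤ) (κ : P → Γ) (κ₁ : B → Γ) (κ₂ : C → Γ) (μ₁ : D → Γ) (μ₂ : E → Γ)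
    (hθ : DynkinDatum θ)
    (b c : Γ) (hdist : θ b c = 0)
    (ι₁ : P → B) (x₁ : B) (h₁ : IsExtensionBy θ κ κ₁ b ι₁ x₁)
    (ι₂ : B → C) (x₂ : C) (h₂ : IsExtensionBy θ κ₁ κ₂ c ι₂ x₂)
    (j₁ : P → D) (y₁ : D) (h₃ : IsExtensionBy θ κ μ₁ c j₁ y₁)
    (j₂ : D → E) (y₂ : E) (h₄ : IsExtensionBy θ μ₁ μ₂ b j₂ y₂) :
    ∃ π : C ≃o E, ∀ u : C, μ₂ (π u) = κ₂ u := by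
  obtain ⟨eC, hκC⟩ := h₁.exists_twoStepLT_relIso hθ h₂ hdist
  obtain ⟨eE, hκE⟩ := h₃.exists_twoStepLT_relIso hθ h₄ (hθ.zero_symm hdist)
  refine ⟨OrderIso.ofRelIsoLT (eC.symm.trans (twoStepSwap.trans eE)), fun u => ?_⟩
  simp [twoStepSwap, hκE, twoStepColor_swapExtending, ← hκC]

/-- Extensions by distant colors commute: extending a connected finite
Γ-colored d-complete poset P first by b then by c yields a Γ-colored poset isomorphic
to the one obtained by extending first by c then by b, when θ b c = 0. -/
theorem distant_extensions_commute {B C D E : Type*} [Fintype Γ]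
    [PartialOrder P] [Fintype P] [Nonempty P]
    [PartialOrder B] [PartialOrder C] [PartialOrder D] [PartialOrder E]
    (θ : Γ → Γ → ℤ) (κ : P → Γ) (κ₁ : B → Γ) (κ₂ : C → Γ) (μ₁ : D → Γ) (μ₂ : E → Γ)
    (hθ : DynkinDatum θ) (hdc : GColoredDComplete θ κ) (hconn : ConnectedPoset P)
    (b c : Γ) (hbc : b ≠ c) (hdist : θ b c = 0)
    (ι₁ : P → B) (x₁ : B) (h₁ : IsExtensionBy θ κ κ₁ b ι₁ x₁)
    (ι₂ : B → C) (x₂ : C) (h₂ : IsExtensionBy θ κ₁ κ₂ c ι₂ x₂)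
    (j₁ : P → D) (y₁ : D) (h₃ : IsExtensionBy θ κ μ₁ c j₁ y₁)
    (j₂ : D → E) (y₂ : E) (h₄ : IsExtensionBy θ μ₁ μ₂ b j₂ y₂) :
    ∃ π : C ≃o E, ∀ u : C, μ₂ (π u) = κ₂ u :=
  distant_extensions_commute_general θ κ κ₁ κ₂ μ₁ μ₂ hθ b c hdist ι₁ x₁ h₁ ι₂ x₂ h₂ j₁ y₁ h₃ j₂ y₂
    h₄
end

section
/- Let P be a connected finite Γ-colored d-complete poset and suppose there exists b ∈ Γ with L_b(P) > 2. Then P is not an order filter of any Γ-colored minuscule poset; i.e., there is no Γ-colored minuscule poset Q (with coloring κ_Q : Q → Γ) such that P is an order filter of Q and κ_Q restricted to P equals κ. -/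
/-!
Common definitions: Dynkin diagram data, Γ-colored posets, and the coloring
properties EC, NA, AC, ICE2, UCB1, LCB1 from the paper, together with
Γ-colored d-complete and Γ-colored minuscule posets, top trees, slant
irreducibility, extensions, lower frontier censuses, and full heaps.
-/

universe u v w

variable {Γ : Type u} {P : Type v}

/-!
Put `x = ι y` in `Q`. Each element of `ι '' L(y,P)` lies in `L(x,Q)`. If `x` is minimal in its
color class of `Q`, (LCB1) bounds the census of `L(x,Q)` by `1`. Otherwise let `z` be the largest
element of color `b` below `x`; by (AC) every element of `ι '' L(y,P)` is comparable with `z`, and it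
cannot lie below `z`, since `z` would then belong to the order filter `ι '' P` and contradict the
minimality of `y` in `P_b`. Hence `ι '' L(y,P) ⊆ (z,x)`, whose census is `2` by (ICE2).
-/

theorem finsum_mem_le_finsum_mem_of_subset {α M : Type*} [AddCommMonoid M] [PartialOrder M]
    [IsOrderedAddMonoid M] {f : α → M} {s t : Set α} (ht : t.Finite) (hst : s ⊆ t)
    (hf : ∀ x ∈ t, 0 ≤ f x) : ∑ᶠ x ∈ s, f x ≤ ∑ᶠ x ∈ t, f x := by
  lift s to Finset α using ht.subset hst
  lift t to Finset α using ht
  rw [finsum_mem_coe_finset, finsum_mem_coe_finset]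
  exact Finset.sum_le_sum_of_subset_of_nonneg (by exact_mod_cast hst) fun x hx _ => hf x hx

section DynkinDatum

variable {Γ : Type*} {θ : Γ → Γ → ℤ}

theorem DynkinDatum.ne_of_adjColor (hθ : DynkinDatum θ) {a b : Γ} (hab : AdjColor θ a b) :
    a ≠ b := by
  rintro rfl
  exact absurd hab (by simp [AdjColor, hθ.1 a])

theorem DynkinDatum.neg_nonneg_of_ne (hθ : DynkinDatum θ) {a b : Γ} (hab : a ≠ b) :
    0 ≤ -θ a b :=
  neg_nonneg.mpr (hθ.2.1 a b hab)

end DynkinDatum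

section LowerCensus

variable {Γ Q : Type*} [PartialOrder Q] {θ : Γ → Γ → ℤ} {κ : Q → Γ}

theorem exists_consecutive_lt (hlf : LocallyFinitePoset Q) {z x : Q} (hzx : z < x)
    (hz : κ z = κ x) :
    ∃ z' < x, κ z' = κ x ∧ ∀ w ∈ Set.Ioo z' x, κ w ≠ κ x := by
  let S := {w | w ∈ Set.Icc z x ∧ κ w = κ x ∧ w < x}
  have hSfin : S.Finite := (hlf z x).subset fun w hw => hw.1
  obtain ⟨z', ⟨⟨hzz', -⟩, hz'x, hz'⟩, hmax⟩ :=
    hSfin.exists_maximalFor id S ⟨z, ⟨le_rfl, hzx.le⟩, hz, hzx⟩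
  refine ⟨z', hz', hz'x, fun w ⟨hz'w, hwx⟩ hw => ?_⟩
  exact hz'w.not_ge (hmax ⟨⟨hzz'.trans hz'w.le, hwx.le⟩, hw, hwx⟩ hz'w.le)

theorem finsum_le_one_of_subset_LSet (hLCB1 : ColoredLCB1 θ κ) {x : Q}
    (hx : ∀ q, κ q = κ x → ¬q < x) {S : Set Q} (hS : S ⊆ LSet θ κ x) :
    ∑ᶠ s ∈ S, -θ (κ s) (κ x) ≤ 1 := by
  obtain ⟨hfin, hle⟩ := hLCB1 x hx
  exact (finsum_mem_le_finsum_mem_of_subset hfin hS fun q hq => neg_nonneg.mpr hq.2.le).trans hle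

theorem finsum_le_two_of_subset_LSet_of_consecutive (hθ : DynkinDatum θ)
    (hlf : LocallyFinitePoset Q) (hAC : ColoredAC θ κ) (hICE2 : ColoredICE2 θ κ) {z x : Q}
    (hzx : z < x) (hz : κ z = κ x) (hcons : ∀ w ∈ Set.Ioo z x, κ w ≠ κ x) {S : Set Q}
    (hS : S ⊆ LSet θ κ x) (hSz : ∀ s ∈ S, ¬s ≤ z) :
    ∑ᶠ s ∈ S, -θ (κ s) (κ x) ≤ 2 := by
  have hSIoo : S ⊆ Set.Ioo z x := fun s hs => by
    obtain ⟨hsx, hadj⟩ := hS hs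
    rw [← hz] at hadj
    refine ⟨(hAC s z hadj).resolve_left (hSz s hs) |>.lt_of_ne ?_, hsx⟩
    rintro rfl
    exact hθ.ne_of_adjColor hadj rfl
  rw [← hICE2 (κ x) z x hz rfl hzx hcons]
  exact finsum_mem_le_finsum_mem_of_subset ((hlf z x).subset Set.Ioo_subset_Icc_self) hSIoo
    fun w hw => hθ.neg_nonneg_of_ne (hcons w hw)

theorem GColoredMinuscule.finsum_le_two_of_subset_LSet (hθ : DynkinDatum θ)
    (hQ : GColoredMinuscule θ κ) {x : Q} {S : Set Q} (hS : S ⊆ LSet θ κ x)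
    (hSlow : ∀ s ∈ S, ∀ z < x, κ z = κ x → ¬s ≤ z) :
    ∑ᶠ s ∈ S, -θ (κ s) (κ x) ≤ 2 := by
  obtain ⟨⟨hlf, -, -, -, hAC, hICE2, -⟩, hLCB1⟩ := hQ
  by_cases hx : ∀ q, κ q = κ x → ¬q < x
  · exact (finsum_le_one_of_subset_LSet hLCB1 hx hS).trans (by norm_num)
  · push Not at hx
    obtain ⟨z, hz, hzx⟩ := hx
    obtain ⟨z', hz'x, hz', hcons⟩ := exists_consecutive_lt hlf hzx hz
    exact finsum_le_two_of_subset_LSet_of_consecutive hθ hlf hAC hICE2 hz'x hz' hcons hS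
      fun s hs => hSlow s hs z' hz'x hz'

end LowerCensus

namespace FilterEmbedding

variable {Γ P Q : Type*} [PartialOrder P] [PartialOrder Q] {θ : Γ → Γ → ℤ} {κ : P → Γ}
  {κQ : Q → Γ} {ι : P → Q}

theorem injective (hι : FilterEmbedding κ κQ ι) : Function.Injective ι := fun p q h =>
  le_antisymm ((hι.1 p q).mp h.le) ((hι.1 q p).mp h.ge)

theorem lt_iff_lt (hι : FilterEmbedding κ κQ ι) {p q : P} : ι p < ι q ↔ p < q := by
  simp only [lt_iff_le_not_ge, hι.1]

theorem LCensus_eq (hι : FilterEmbedding κ κQ ι) (y : P) :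
    LCensus θ κ y = ∑ᶠ q ∈ ι '' LSet θ κ y, -θ (κQ q) (κQ (ι y)) := by
  rw [finsum_mem_image hι.injective.injOn]
  simp only [LCensus, hι.2.1]

theorem image_LSet_subset (hι : FilterEmbedding κ κQ ι) (y : P) :
    ι '' LSet θ κ y ⊆ LSet θ κQ (ι y) := by
  rintro _ ⟨p, ⟨hpy, hadj⟩, rfl⟩
  exact ⟨hι.lt_iff_lt.mpr hpy, by rwa [hι.2.1, hι.2.1]⟩

theorem not_le_of_lt_of_isLeast_color (hι : FilterEmbedding κ κQ ι) {y : P}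
    (hy : ∀ p, κ p = κ y → y ≤ p) (p : P) (z : Q) (hzy : z < ι y) (hz : κQ z = κQ (ι y)) :
    ¬ι p ≤ z := fun hpz => by
  obtain ⟨v, rfl⟩ := hι.2.2 hpz ⟨p, rfl⟩
  rw [hι.2.1, hι.2.1] at hz
  exact hzy.not_ge ((hι.1 y v).mpr (hy v hz))

end FilterEmbedding

theorem census_gt_two_not_filter_general [PartialOrder P]
    (θ : Γ → Γ → ℤ) (κ : P → Γ) (hθ : DynkinDatum θ)
    (b : Γ) (y : P) (hy : κ y = b) (hymin : ∀ z : P, κ z = b → y ≤ z)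
    (hL : 2 < LCensus θ κ y) :
    ¬∃ (Q : Type w) (instQ : PartialOrder Q) (κQ : Q → Γ) (ι : P → Q),
        @GColoredMinuscule Γ Q instQ θ κQ ∧
          @FilterEmbedding Γ P Q inferInstance instQ κ κQ ι := by
  rintro ⟨Q, instQ, κQ, ι, hQ, hι⟩
  subst hy
  have hle := hQ.finsum_le_two_of_subset_LSet hθ (hι.image_LSet_subset y) <| by
    rintro _ ⟨p, -, rfl⟩
    exact hι.not_le_of_lt_of_isLeast_color hymin p
  rw [← hι.LCensus_eq] at hle
  exact hle.not_gt hL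

/-- A connected finite Γ-colored d-complete poset with some lower
frontier census exceeding 2 is not an order filter of any Γ-colored minuscule poset. -/
theorem census_gt_two_not_filter [Fintype Γ] [PartialOrder P] [Fintype P] [Nonempty P]
    (θ : Γ → Γ → ℤ) (κ : P → Γ) (hθ : DynkinDatum θ)
    (hdc : GColoredDComplete θ κ) (hconn : ConnectedPoset P)
    (b : Γ) (y : P) (hy : κ y = b) (hymin : ∀ z : P, κ z = b → y ≤ z)
    (hL : 2 < LCensus θ κ y) :
    ¬∃ (Q : Type w) (instQ : PartialOrder Q) (κQ : Q → Γ) (ι : P → Q),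
        @GColoredMinuscule Γ Q instQ θ κQ ∧
          @FilterEmbedding Γ P Q inferInstance instQ κ κQ ι :=
  census_gt_two_not_filter_general θ κ hθ b y hy hymin hL
end
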